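/- Let α, φ ∈ ℝ. In the setting of the spin singlet ρ = |ψ⟩⟨ψ|, |ψ⟩ = (|01⟩ − |10⟩)/√2 on ℂ²⊗ℂ², with 𝓑 the generalized Clauser–Horne operator for η_a = η_b = 0, α_a = α, α_b = −α and directions a = (1,0,0), a' = (0,1,0), b = (cos φ, sin φ, 0), b' = (−sin φ, cos φ, 0), the third cumulant κ₃ = ⟨𝓑³⟩ − 3⟨𝓑⟩⟨𝓑²⟩ + 2⟨𝓑⟩³ (where ⟨X⟩ = Tr(ρ·X)) satisfies |κ₃| ≤ (√6/9)·α⁶ for all φ, with equality attained at φ = arcsin(1/√3) − π/4. -/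

import Mathlib

open Matrix Kronecker

noncomputable section

/-- The Pauli matrix σ₁. -/
def σ1 : Matrix (Fin 2) (Fin 2) ℂ := !![0, 1; 1, 0]

/-- The Pauli matrix σ₂. -/
def σ2 : Matrix (Fin 2) (Fin 2) ℂ := !![0, -Complex.I; Complex.I, 0]

/-- The Pauli matrix σ₃. -/
def σ3 : Matrix (Fin 2) (Fin 2) ℂ := !![1, 0; 0, -1]

/-- `σ · n = n₁σ₁ + n₂σ₂ + n₃σ₃` for a real vector `n ∈ ℝ³`. -/
def pauliDot (n : Fin 3 → ℝ) : Matrix (Fin 2) (Fin 2) ℂ :=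
  (n 0 : ℂ) • σ1 + (n 1 : ℂ) • σ2 + (n 2 : ℂ) • σ3

/-- Biased unsharp POVM element `E₊(n) = ((1+η)·I + α·σ·n)/2`. -/
def Eplus (η α : ℝ) (n : Fin 3 → ℝ) : Matrix (Fin 2) (Fin 2) ℂ :=
  ((1 / 2 : ℝ) : ℂ) • (((1 + η : ℝ) : ℂ) • (1 : Matrix (Fin 2) (Fin 2) ℂ)
    + (α : ℂ) • pauliDot n)

/-- The generalized Clauser–Horne operator on ℂ²⊗ℂ². -/
def CHop (ηa ηb αa αb : ℝ) (a a' b b' : Fin 3 → ℝ) :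
    Matrix (Fin 2 × Fin 2) (Fin 2 × Fin 2) ℂ :=
  Eplus ηa αa a ⊗ₖ Eplus ηb αb b - Eplus ηa αa a ⊗ₖ Eplus ηb αb b'
    + Eplus ηa αa a' ⊗ₖ Eplus ηb αb b + Eplus ηa αa a' ⊗ₖ Eplus ηb αb b'
    - ((1 + ηb : ℝ) : ℂ) • (Eplus ηa αa a' ⊗ₖ (1 : Matrix (Fin 2) (Fin 2) ℂ))
    - ((1 + ηa : ℝ) : ℂ) • ((1 : Matrix (Fin 2) (Fin 2) ℂ) ⊗ₖ Eplus ηb αb b)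
    + ((((1 + ηa) * (1 + ηb) - |αa * αb|) / 2 : ℝ) : ℂ) •
        (1 : Matrix (Fin 2 × Fin 2) (Fin 2 × Fin 2) ℂ)

end

noncomputable section

/-- The spin-singlet state vector `|ψ⟩ = (|01⟩ − |10⟩)/√2` on ℂ²⊗ℂ². -/
def singletVec : Fin 2 × Fin 2 → ℂ := fun i =>
  if i = (0, 1) then ((1 / Real.sqrt 2 : ℝ) : ℂ)
  else if i = (1, 0) then (-(1 / Real.sqrt 2 : ℝ) : ℂ) else 0

/-- The spin-singlet density matrix `ρ = |ψ⟩⟨ψ|`. -/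
def singletRho : Matrix (Fin 2 × Fin 2) (Fin 2 × Fin 2) ℂ :=
  Matrix.of fun i j => singletVec i * (starRingEnd ℂ) (singletVec j)

/-- The generalized CH operator with bias `0`, unsharpness `α, −α`, and directions
`a = (1,0,0)`, `a' = (0,1,0)`, `b = (cos φ, sin φ, 0)`, `b' = (−sin φ, cos φ, 0)`. -/
def Bop (α φ : ℝ) : Matrix (Fin 2 × Fin 2) (Fin 2 × Fin 2) ℂ :=
  CHop 0 0 α (-α) ![1, 0, 0] ![0, 1, 0] ![Real.cos φ, Real.sin φ, 0]
    ![-Real.sin φ, Real.cos φ, 0]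

end

noncomputable section

/-- The third cumulant `κ₃ = ⟨𝓑³⟩ − 3⟨𝓑⟩⟨𝓑²⟩ + 2⟨𝓑⟩³` of the generalized CH
operator in the spin-singlet state, with `⟨X⟩ = Tr(ρ·X)`. -/
def kappa3 (α φ : ℝ) : ℂ :=
  Matrix.trace (singletRho * Bop α φ ^ 3)
    - 3 * Matrix.trace (singletRho * Bop α φ) * Matrix.trace (singletRho * Bop α φ ^ 2)
    + 2 * Matrix.trace (singletRho * Bop α φ) ^ 3

/-! With zero bias and `α_b = -α_a` the single-party terms of the Clauser–Horne operator cancel,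
leaving `𝓑 = -(α²/4) (K + 2)` with `K = σ·a ⊗ σ·(b - b') + σ·a' ⊗ σ·(b + b')`. For the chosen
directions `K` only exchanges `|01⟩` and `|10⟩`, with amplitude
`w = 2 (cos φ + sin φ) - 2 i (cos φ - sin φ)`; hence `K³ = |w|² K`, and in the singlet
`⟨K⟩ = -Re w`, `⟨K²⟩ = |w|²`. The third cumulant is invariant under shifts by scalars and cubic
under scaling, so `κ₃ = -(α⁶/64) · 2 Re w (Im w)² = -(√2/2) α⁶ sin θ cos² θ` with `θ = φ + π/4`.
Finally `s (1 - s²)` takes its extreme values `±2√3/9` on `[-1, 1]` at `s = ±1/√3`. -/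

section ThirdCumulant

variable {n R : Type*} [Fintype n] [DecidableEq n] [CommRing R]

def thirdCumulant (ρ X : Matrix n n R) : R :=
  trace (ρ * X ^ 3) - 3 * trace (ρ * X) * trace (ρ * X ^ 2) + 2 * trace (ρ * X) ^ 3

theorem thirdCumulant_smul (ρ X : Matrix n n R) (c : R) :
    thirdCumulant ρ (c • X) = c ^ 3 * thirdCumulant ρ X := by
  simp only [thirdCumulant, smul_pow, Matrix.mul_smul, trace_smul, smul_eq_mul]
  ring

theorem thirdCumulant_add_smul_one {ρ : Matrix n n R} (hρ : trace ρ = 1) (X : Matrix n n R)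
    (c : R) : thirdCumulant ρ (X + c • 1) = thirdCumulant ρ X := by
  simp only [thirdCumulant, pow_succ, pow_zero, one_mul, add_mul, mul_add, Matrix.smul_mul,
    Matrix.mul_smul, Matrix.mul_one, trace_add, trace_smul, smul_eq_mul, hρ, ← mul_assoc]
  ring

end ThirdCumulant

theorem CHop_zero_zero_neg (α : ℝ) (a a' b b' : Fin 3 → ℝ) :
    CHop 0 0 α (-α) a a' b b' = (-(α : ℂ) ^ 2 / 4) •
      (pauliDot a ⊗ₖ (pauliDot b - pauliDot b') + pauliDot a' ⊗ₖ (pauliDot b + pauliDot b')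
        + (2 : ℂ) • 1) := by
  have habs : |α * -α| = α ^ 2 := by rw [mul_neg, abs_neg, abs_mul_self, sq]
  have kronecker_sub (A B C : Matrix (Fin 2) (Fin 2) ℂ) : A ⊗ₖ (B - C) = A ⊗ₖ B - A ⊗ₖ C :=
    map_sub (kroneckerBilinear (R := ℂ) A) B C
  simp only [CHop, Eplus, habs, kronecker_sub, add_kronecker, kronecker_add, smul_kronecker,
    kronecker_smul, one_kronecker_one]
  push_cast
  module

def exchangeOp (w : ℂ) : Matrix (Fin 2 × Fin 2) (Fin 2 × Fin 2) ℂ :=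
  single (0, 1) (1, 0) w + single (1, 0) (0, 1) (star w)

theorem exchangeOp_sq (w : ℂ) : exchangeOp w ^ 2 =
    single (0, 1) (0, 1) (Complex.normSq w : ℂ) + single (1, 0) (1, 0) (Complex.normSq w : ℂ) := by
  simp [exchangeOp, sq, add_mul, mul_add, single_mul_single_of_ne, ← Complex.mul_conj, add_comm,
    mul_comm]

theorem exchangeOp_pow_three (w : ℂ) :
    exchangeOp w ^ 3 = (Complex.normSq w : ℂ) • exchangeOp w := by
  rw [pow_succ, exchangeOp_sq]
  simp [exchangeOp, add_mul, mul_add, single_mul_single_of_ne, smul_single, ← Complex.mul_conj]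

theorem ofReal_inv_sqrt_two_mul_self : ((√2 : ℝ) : ℂ)⁻¹ * ((√2 : ℝ) : ℂ)⁻¹ = 1 / 2 := by
  rw [← mul_inv, ← Complex.ofReal_mul, Real.mul_self_sqrt zero_le_two]
  norm_num

theorem singletRho_apply (i j : Fin 2 × Fin 2) :
    singletRho i j = singletVec i * star (singletVec j) := rfl

theorem trace_singletRho : trace singletRho = 1 := by
  simp [trace, Fintype.sum_prod_type, singletRho_apply, singletVec, ofReal_inv_sqrt_two_mul_self]
  norm_num

theorem trace_singletRho_mul_exchangeOp (w : ℂ) :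
    trace (singletRho * exchangeOp w) = -(w.re : ℂ) := by
  simp [exchangeOp, Matrix.mul_add, trace_mul_single, singletRho_apply, singletVec,
    ofReal_inv_sqrt_two_mul_self]
  have h := Complex.add_conj w
  push_cast at h
  linear_combination (-1 / 2 : ℂ) * h

theorem trace_singletRho_mul_exchangeOp_sq (w : ℂ) :
    trace (singletRho * exchangeOp w ^ 2) = (Complex.normSq w : ℂ) := by
  simp [exchangeOp_sq, Matrix.mul_add, trace_mul_single, singletRho_apply, singletVec,
    ofReal_inv_sqrt_two_mul_self]
  ring

theorem thirdCumulant_singletRho_exchangeOp (w : ℂ) :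
    thirdCumulant singletRho (exchangeOp w) = (2 * w.re * w.im ^ 2 : ℝ) := by
  rw [thirdCumulant, exchangeOp_pow_three, Matrix.mul_smul, trace_smul, smul_eq_mul,
    trace_singletRho_mul_exchangeOp, trace_singletRho_mul_exchangeOp_sq, Complex.normSq_apply]
  push_cast
  ring

theorem pauliDot_kronecker_eq_exchangeOp (c s : ℝ) :
    pauliDot ![1, 0, 0] ⊗ₖ (pauliDot ![c, s, 0] - pauliDot ![-s, c, 0])
      + pauliDot ![0, 1, 0] ⊗ₖ (pauliDot ![c, s, 0] + pauliDot ![-s, c, 0])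
      = exchangeOp (2 * (c + s) - 2 * (c - s) * Complex.I) := by
  ext ⟨i, k⟩ ⟨j, l⟩
  fin_cases i <;> fin_cases k <;> fin_cases j <;> fin_cases l <;>
    simp [pauliDot, σ1, σ2, σ3, exchangeOp] <;> ring_nf <;> simp only [Complex.I_sq] <;> ring

section

open Real

theorem Bop_eq_smul_exchangeOp_add (α φ : ℝ) : Bop α φ = (-(α : ℂ) ^ 2 / 4) •
    (exchangeOp (2 * (cos φ + sin φ) - 2 * (cos φ - sin φ) * Complex.I) + (2 : ℂ) • 1) := by
  rw [Bop, CHop_zero_zero_neg, pauliDot_kronecker_eq_exchangeOp]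

theorem cos_add_sin_mul_cos_sub_sin_sq (φ : ℝ) : (cos φ + sin φ) * (cos φ - sin φ) ^ 2
    = 2 * √2 * (sin (φ + π / 4) * cos (φ + π / 4) ^ 2) := by
  have h2 : √2 * √2 = 2 := mul_self_sqrt zero_le_two
  rw [sin_add, cos_add, sin_pi_div_four, cos_pi_div_four]
  linear_combination -(cos φ + sin φ) * (cos φ - sin φ) ^ 2 * (√2 * √2 + 2) / 4 * h2

theorem kappa3_eq_sin_mul_cos_sq (α φ : ℝ) :
    kappa3 α φ = (-(√2 / 2 * α ^ 6 * (sin (φ + π / 4) * cos (φ + π / 4) ^ 2)) : ℝ) := by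
  have hw : (2 * (cos φ + sin φ) - 2 * (cos φ - sin φ) * Complex.I : ℂ)
      = ⟨2 * (cos φ + sin φ), -(2 * (cos φ - sin φ))⟩ := by
    apply Complex.ext <;> simp [-Complex.ofReal_cos, -Complex.ofReal_sin]
  rw [show kappa3 α φ = thirdCumulant singletRho (Bop α φ) from rfl, Bop_eq_smul_exchangeOp_add,
    thirdCumulant_smul, thirdCumulant_add_smul_one trace_singletRho, hw,
    thirdCumulant_singletRho_exchangeOp,
    show (-(α : ℂ) ^ 2 / 4) ^ 3 = ((-α ^ 2 / 4) ^ 3 : ℝ) by push_cast; ring,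
    ← Complex.ofReal_mul, Complex.ofReal_inj]
  linear_combination (-α ^ 6 / 4) * cos_add_sin_mul_cos_sub_sin_sq φ

theorem sin_mul_cos_sq_le (θ : ℝ) : sin θ * cos θ ^ 2 ≤ 2 * √3 / 9 := by
  have h3 : √3 * √3 = 3 := mul_self_sqrt (by norm_num)
  have hfactor : 2 * √3 / 9 - sin θ * cos θ ^ 2
      = (sin θ - √3 / 3) ^ 2 * (sin θ + 2 * √3 / 3) := by
    linear_combination (-sin θ) * sin_sq_add_cos_sq θ + (sin θ / 3 - 2 * √3 / 27) * h3
  have hpos : 0 ≤ sin θ + 2 * √3 / 3 := by nlinarith [neg_one_le_sin θ, sqrt_nonneg 3]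
  linarith [mul_nonneg (sq_nonneg (sin θ - √3 / 3)) hpos]

theorem abs_sin_mul_cos_sq_le (θ : ℝ) : |sin θ * cos θ ^ 2| ≤ 2 * √3 / 9 := by
  refine abs_le.mpr ⟨?_, sin_mul_cos_sq_le θ⟩
  have h := sin_mul_cos_sq_le (-θ)
  rw [sin_neg, cos_neg] at h
  linarith

theorem sin_mul_cos_sq_arcsin_inv_sqrt_three :
    sin (arcsin (1 / √3)) * cos (arcsin (1 / √3)) ^ 2 = 2 * √3 / 9 := by
  have h3 : √3 * √3 = 3 := mul_self_sqrt (by norm_num)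
  have hx : 1 / √3 = √3 / 3 := by field_simp; linarith
  have hx1 : √3 / 3 ≤ 1 := by nlinarith [sqrt_nonneg 3]
  have hx0 : -1 ≤ √3 / 3 := by linarith [sqrt_nonneg 3]
  rw [hx, cos_sq', sin_arcsin hx0 hx1]
  linear_combination (-√3 / 27) * h3

end

/-- The third cumulant of the CH operator in the spin singlet satisfies
`|κ₃| ≤ (√6/9)·α⁶` for all `φ`, with equality at `φ = arcsin(1/√3) − π/4`. -/
theorem singlet_CH_third_cumulant_bound (α φ : ℝ) :
    ‖kappa3 α φ‖ ≤ Real.sqrt 6 / 9 * α ^ 6 ∧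
    ‖kappa3 α (Real.arcsin (1 / Real.sqrt 3) - Real.pi / 4)‖
      = Real.sqrt 6 / 9 * α ^ 6 := by
  have hnorm (ψ : ℝ) : ‖kappa3 α ψ‖
      = √2 / 2 * α ^ 6 * |Real.sin (ψ + Real.pi / 4) * Real.cos (ψ + Real.pi / 4) ^ 2| := by
    rw [kappa3_eq_sin_mul_cos_sq, Complex.norm_real, norm_neg, Real.norm_eq_abs, abs_mul,
      abs_of_nonneg (by positivity : 0 ≤ √2 / 2 * α ^ 6)]
  have h6 : √6 / 9 * α ^ 6 = √2 / 2 * α ^ 6 * (2 * √3 / 9) := by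
    rw [show (6 : ℝ) = 2 * 3 by norm_num, Real.sqrt_mul zero_le_two]
    ring
  refine ⟨?_, ?_⟩
  · rw [hnorm, h6]
    gcongr
    exact abs_sin_mul_cos_sq_le _
  · rw [hnorm, h6, sub_add_cancel, sin_mul_cos_sq_arcsin_inv_sqrt_three,
      abs_of_nonneg (by positivity)]
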